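/- Let (∂Ω, σ) be Ahlfors regular with constant M (i.e. (R/2)^{n+1} ≤ σ(C_R(Q,τ) ∩ ∂Ω) ≤ M R^{n+1} for all boundary points and radii). Then for any (Y,s) ∈ Ω with parabolic distance δ(Y,s) to ∂Ω and any R > 0, the sublevel-set bound holds: for all β > (1/(2R))^{1/2}, the Lebesgue measure of {(Y,s) ∈ Ω ∩ C_{2R}(Q,τ) : δ(Y,s)^{−1/2} > β} is at most C R^{n+1} β^{−2}, and consequently ∫_{Ω ∩ C_{2R}(Q,τ)} δ(Y,s)^{−1/2} dY ds ≤ C R^{n+3/2}, with C depending only on n and M. -/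

import Mathlib

/-!
If `δ(p) < r` for a point `p` of `C_{2R}(Q)`, then a boundary point `q₀` lies within parabolic
distance `r` of `p`, and by the lower Ahlfors bound the piece `C_{r/2}(q₀) ∩ ∂Ω` of `∂Ω ∩ C_{6R}(Q)`
has `σ`-measure at least `(r/4)^{n+1}` and lies within distance `2r` of `p`. Conversely, the points
within distance `2r` of a fixed boundary point fill a set of Lebesgue measure `≲ r^{n+2}`.
Counting the close pairs in both orders (Tonelli) and using the upper Ahlfors bound on
`∂Ω ∩ C_{6R}(Q)` gives `|{p ∈ C_{2R}(Q) : δ(p) < r}| ≲ R^{n+1} r` for `r ≤ 2R`; with `r = β⁻²`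
this is the sublevel bound. In the layer-cake formula for `∫ δ^{-1/2}`, the distribution function is
bounded by `|C_{2R}|` below the level `(2R)^{-1/2}` and by the sublevel bound above it.
-/

open MeasureTheory Real Set Filter Topology
open scoped ENNReal NNReal BigOperators

noncomputable section

abbrev Pt (n : ℕ) := EuclideanSpace ℝ (Fin n) × ℝ

/-- Parabolic distance between points of `ℝ^n × ℝ`. -/
def pdist {n : ℕ} (p q : Pt n) : ℝ := dist p.1 q.1 + Real.sqrt |p.2 - q.2|

/-- The parabolic cylinder of radius `R` centered at `c`. -/
def pcyl {n : ℕ} (c : Pt n) (R : ℝ) : Set (Pt n) :=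
  {p | dist p.1 c.1 < R ∧ |p.2 - c.2| < R ^ 2}

/-- Parabolic distance from a point to the boundary of `Ω`. -/
def pbdry {n : ℕ} (Ω : Set (Pt n)) (p : Pt n) : ℝ := sInf (pdist p '' frontier Ω)

/-- `σm` is Ahlfors regular (of parabolic dimension `n+1`) on `∂Ω` with constant `M`. -/
def Ahlfors {n : ℕ} (σm : Measure (Pt n)) (Ω : Set (Pt n)) (M : ℝ) : Prop :=
  ∀ Q ∈ frontier Ω, ∀ R : ℝ, 0 < R →
    ENNReal.ofReal ((R / 2) ^ (n + 1)) ≤ σm (pcyl Q R ∩ frontier Ω) ∧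
      σm (pcyl Q R ∩ frontier Ω) ≤ ENNReal.ofReal (M * R ^ (n + 1))

theorem mul_measure_le_mul_measure_univ {α β : Type*} [MeasurableSpace α] [MeasurableSpace β]
    {μ : Measure α} {ν : Measure β} [SFinite μ] [SFinite ν] {E : Set (α × β)}
    (hE : MeasurableSet E) {s : Set α} (hs : MeasurableSet s) {a b : ℝ≥0∞}
    (ha : ∀ x ∈ s, a ≤ ν (Prod.mk x ⁻¹' E)) (hb : ∀ y, μ ((fun x => (x, y)) ⁻¹' E ∩ s) ≤ b) :
    a * μ s ≤ b * ν univ :=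
  calc a * μ s = ∫⁻ _ in s, a ∂μ := (setLIntegral_const s a).symm
    _ ≤ ∫⁻ x in s, ν (Prod.mk x ⁻¹' E) ∂μ := setLIntegral_mono' hs ha
    _ = ∫⁻ y, μ.restrict s ((fun x => (x, y)) ⁻¹' E) ∂ν := by
      rw [← Measure.prod_apply hE, Measure.prod_apply_symm hE]
    _ ≤ ∫⁻ _, b ∂ν := lintegral_mono fun y => by
      rw [Measure.restrict_apply' hs]; exact hb y
    _ = b * ν univ := lintegral_const b

theorem lintegral_Ioi_ofReal_div_sq {B T : ℝ} (hB : 0 ≤ B) (hT : 0 < T) :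
    ∫⁻ t in Ioi T, ENNReal.ofReal (B / t ^ 2) = ENNReal.ofReal (B / T) := by
  have h_eq : EqOn (fun t : ℝ => B / t ^ 2) (fun t => B * t ^ (-2 : ℝ)) (Ioi T) := fun t ht => by
    simp only [Real.rpow_neg (hT.trans ht).le, div_eq_mul_inv, Real.rpow_two]
  rw [setLIntegral_congr_fun measurableSet_Ioi (fun t ht => congrArg ENNReal.ofReal (h_eq ht)),
    ← ofReal_integral_eq_lintegral_ofReal
      ((integrableOn_Ioi_rpow_of_lt (by norm_num) hT).const_mul B)
      ((ae_restrict_iff' measurableSet_Ioi).2 (ae_of_all _ fun t ht =>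
        mul_nonneg hB (Real.rpow_nonneg (hT.trans ht).le _))),
    integral_const_mul, integral_Ioi_rpow_of_lt (by norm_num) hT]
  norm_num [Real.rpow_neg_one, div_eq_mul_inv]

theorem lintegral_ofReal_le_of_meas_lt_le {α : Type*} [MeasurableSpace α] (μ : Measure α)
    {f : α → ℝ} (hf_nonneg : 0 ≤ f) (hf : Measurable f) {A B T : ℝ} (hA : 0 ≤ A) (hB : 0 ≤ B)
    (hT : 0 < T) (h_le : ∀ t, μ {x | t < f x} ≤ ENNReal.ofReal A)
    (h_tail : ∀ t, T < t → μ {x | t < f x} ≤ ENNReal.ofReal (B / t ^ 2)) :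
    ∫⁻ x, ENNReal.ofReal (f x) ∂μ ≤ ENNReal.ofReal (A * T + B / T) := by
  rw [lintegral_eq_lintegral_meas_lt μ (ae_of_all _ hf_nonneg) hf.aemeasurable,
    ← Ioc_union_Ioi_eq_Ioi hT.le, lintegral_union measurableSet_Ioi Ioc_disjoint_Ioi_same,
    ENNReal.ofReal_add (by positivity) (by positivity)]
  gcongr
  · calc ∫⁻ t in Ioc 0 T, μ {x | t < f x} ≤ ∫⁻ _ in Ioc 0 T, ENNReal.ofReal A :=
          lintegral_mono fun t => h_le t
      _ = ENNReal.ofReal (A * T) := by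
          rw [setLIntegral_const, Real.volume_Ioc, sub_zero, ENNReal.ofReal_mul hA]
  · calc ∫⁻ t in Ioi T, μ {x | t < f x} ≤ ∫⁻ t in Ioi T, ENNReal.ofReal (B / t ^ 2) :=
          setLIntegral_mono' measurableSet_Ioi h_tail
      _ = ENNReal.ofReal (B / T) := lintegral_Ioi_ofReal_div_sq hB hT

theorem Real.sqrt_add_le_add_sqrt {x y : ℝ} (hx : 0 ≤ x) (hy : 0 ≤ y) : √(x + y) ≤ √x + √y :=
  Real.sqrt_le_iff.2
    ⟨by positivity, by nlinarith [sq_sqrt hx, sq_sqrt hy, sqrt_nonneg x, sqrt_nonneg y]⟩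

theorem lt_one_div_sq_of_lt_rpow_neg_half {x β : ℝ} (hx : 0 ≤ x) (hβ : 0 < β)
    (h : β < x ^ (-(1 : ℝ) / 2)) : x < 1 / β ^ 2 := by
  have hx0 : 0 < x := hx.lt_of_ne' fun hx0 => by
    rw [hx0, Real.zero_rpow (by norm_num)] at h; exact hβ.not_gt h
  have := Real.rpow_lt_rpow_of_neg hβ h (show (-2 : ℝ) < 0 by norm_num)
  rwa [← Real.rpow_mul hx, show -(1 : ℝ) / 2 * -2 = 1 by norm_num, Real.rpow_one,
    Real.rpow_neg hβ.le, Real.rpow_two, ← one_div] at this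

theorem add_le_rpow_three_halves (n : ℕ) {a b R : ℝ} (ha : 0 ≤ a) (hb : 0 ≤ b) (hR : 0 < R) :
    2 * a * (2 * R) ^ (n + 2) * √(1 / (2 * R)) + b * R ^ (n + 1) / √(1 / (2 * R)) ≤
      (2 ^ (n + 3) * a + 2 * b) * R ^ ((n : ℝ) + 3 / 2) := by
  obtain ⟨s, hs, rfl⟩ : ∃ s, 0 < s ∧ R = s ^ 2 := ⟨√R, by positivity, (sq_sqrt hR.le).symm⟩
  have hw : (1 : ℝ) ≤ √2 := Real.one_le_sqrt.2 (by norm_num)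
  have hT : √(1 / (2 * s ^ 2)) = (√2 * s)⁻¹ := by
    rw [one_div, Real.sqrt_inv, Real.sqrt_mul (by norm_num), Real.sqrt_sq hs.le]
  have hpow : (s ^ 2) ^ ((n : ℝ) + 3 / 2) = s ^ (2 * n + 3) := by
    rw [← Real.rpow_natCast, ← Real.rpow_mul hs.le]
    norm_num [← Real.rpow_natCast]
    ring_nf
  rw [hT, hpow]
  calc 2 * a * (2 * s ^ 2) ^ (n + 2) * (√2 * s)⁻¹ + b * (s ^ 2) ^ (n + 1) / (√2 * s)⁻¹
      = 2 ^ (n + 3) * a * s ^ (2 * n + 3) / √2 + b * s ^ (2 * n + 3) * √2 := by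
        field_simp; ring
    _ ≤ 2 ^ (n + 3) * a * s ^ (2 * n + 3) + b * s ^ (2 * n + 3) * 2 := by
        gcongr
        · exact div_le_self (by positivity) hw
        · exact Real.sqrt_le_iff.2 ⟨by norm_num, by norm_num⟩
    _ = (2 ^ (n + 3) * a + 2 * b) * s ^ (2 * n + 3) := by ring

section Parabolic

variable {n : ℕ}

theorem pdist_self (p : Pt n) : pdist p p = 0 := by simp [pdist]

theorem pdist_comm (p q : Pt n) : pdist p q = pdist q p := by
  rw [pdist, pdist, dist_comm, abs_sub_comm]

theorem pdist_nonneg (p q : Pt n) : 0 ≤ pdist p q := by unfold pdist; positivity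

theorem pdist_triangle (p q r : Pt n) : pdist p r ≤ pdist p q + pdist q r := by
  have h1 := dist_triangle p.1 q.1 r.1
  have h2 : √|p.2 - r.2| ≤ √|p.2 - q.2| + √|q.2 - r.2| :=
    (Real.sqrt_le_sqrt (abs_sub_le p.2 q.2 r.2)).trans
      (Real.sqrt_add_le_add_sqrt (abs_nonneg _) (abs_nonneg _))
  unfold pdist; linarith

theorem continuous_pdist : Continuous fun x : Pt n × Pt n => pdist x.1 x.2 := by
  unfold pdist; fun_prop

theorem dist_fst_le_pdist (p q : Pt n) : dist p.1 q.1 ≤ pdist p q :=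
  le_add_of_nonneg_right (sqrt_nonneg _)

theorem sqrt_abs_snd_sub_le_pdist (p q : Pt n) : √|p.2 - q.2| ≤ pdist p q :=
  le_add_of_nonneg_left dist_nonneg

theorem mem_pcyl_of_pdist_lt {p c : Pt n} {ρ : ℝ} (h : pdist p c < ρ) : p ∈ pcyl c ρ :=
  ⟨(dist_fst_le_pdist p c).trans_lt h,
    (Real.sqrt_lt' ((pdist_nonneg p c).trans_lt h)).1 ((sqrt_abs_snd_sub_le_pdist p c).trans_lt h)⟩

theorem pdist_lt_of_mem_pcyl {p c : Pt n} {ρ : ℝ} (h : p ∈ pcyl c ρ) : pdist p c < 2 * ρ := by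
  have hρ : 0 < ρ := dist_nonneg.trans_lt h.1
  have : √|p.2 - c.2| < ρ := (Real.sqrt_lt' hρ).2 h.2
  unfold pdist; linarith [h.1]

theorem mem_pcyl_add {c p q : Pt n} {a b : ℝ} (hp : p ∈ pcyl c a) (hq : q ∈ pcyl p b) :
    q ∈ pcyl c (a + b) := by
  have ha : 0 ≤ a := dist_nonneg.trans hp.1.le
  have hb : 0 ≤ b := dist_nonneg.trans hq.1.le
  refine ⟨(dist_triangle q.1 p.1 c.1).trans_lt (by linarith [hp.1, hq.1]), ?_⟩
  calc |q.2 - c.2| ≤ |q.2 - p.2| + |p.2 - c.2| := abs_sub_le _ _ _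
    _ < b ^ 2 + a ^ 2 := add_lt_add hq.2 hp.2
    _ ≤ (a + b) ^ 2 := by nlinarith

theorem pcyl_eq_ball_prod_ball (c : Pt n) (ρ : ℝ) :
    pcyl c ρ = Metric.ball c.1 ρ ×ˢ Metric.ball c.2 (ρ ^ 2) := rfl

theorem isOpen_pcyl (c : Pt n) (ρ : ℝ) : IsOpen (pcyl c ρ) := by
  rw [pcyl_eq_ball_prod_ball]; exact Metric.isOpen_ball.prod Metric.isOpen_ball

theorem bddBelow_image_pdist (Ω : Set (Pt n)) (p : Pt n) : BddBelow (pdist p '' frontier Ω) :=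
  ⟨0, by rintro _ ⟨q, -, rfl⟩; exact pdist_nonneg p q⟩

theorem pbdry_nonneg (Ω : Set (Pt n)) (p : Pt n) : 0 ≤ pbdry Ω p :=
  Real.sInf_nonneg (by rintro _ ⟨q, -, rfl⟩; exact pdist_nonneg p q)

theorem pbdry_le_pdist {Ω : Set (Pt n)} {q : Pt n} (hq : q ∈ frontier Ω) (p : Pt n) :
    pbdry Ω p ≤ pdist p q :=
  csInf_le (bddBelow_image_pdist Ω p) ⟨q, hq, rfl⟩

theorem exists_pdist_lt_of_pbdry_lt {Ω : Set (Pt n)} (hΩ : (frontier Ω).Nonempty) {p : Pt n}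
    {r : ℝ} (h : pbdry Ω p < r) : ∃ q ∈ frontier Ω, pdist p q < r := by
  obtain ⟨_, ⟨q, hq, rfl⟩, hqr⟩ := (csInf_lt_iff (bddBelow_image_pdist Ω p) (hΩ.image _)).1 h
  exact ⟨q, hq, hqr⟩

theorem pbdry_le_pbdry_add_pdist (Ω : Set (Pt n)) (p p' : Pt n) :
    pbdry Ω p ≤ pbdry Ω p' + pdist p p' := by
  rcases (frontier Ω).eq_empty_or_nonempty with hΩ | hΩ
  · simp only [pbdry, hΩ, image_empty, Real.sInf_empty, zero_add]
    exact pdist_nonneg p p'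
  · rw [← sub_le_iff_le_add]
    refine le_csInf (hΩ.image _) ?_
    rintro _ ⟨q, hq, rfl⟩
    linarith [pbdry_le_pdist hq p, pdist_triangle p p' q]

theorem abs_pbdry_sub_le (Ω : Set (Pt n)) (p q : Pt n) :
    |pbdry Ω p - pbdry Ω q| ≤ pdist p q :=
  abs_sub_le_iff.2 ⟨by linarith [pbdry_le_pbdry_add_pdist Ω p q],
    by linarith [pbdry_le_pbdry_add_pdist Ω q p, pdist_comm q p]⟩

theorem continuous_pbdry (Ω : Set (Pt n)) : Continuous (pbdry Ω) := by
  refine continuous_iff_continuousAt.2 fun p => tendsto_iff_dist_tendsto_zero.2 ?_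
  have h : Tendsto (fun q => pdist q p) (𝓝 p) (𝓝 (pdist p p)) :=
    (continuous_pdist.comp (continuous_id.prodMk continuous_const)).tendsto p
  rw [pdist_self] at h
  exact squeeze_zero (fun _ => dist_nonneg) (fun q => abs_pbdry_sub_le Ω q p) h

def unitBallVolume (n : ℕ) : ℝ :=
  (volume (Metric.ball (0 : EuclideanSpace ℝ (Fin n)) 1)).toReal

theorem unitBallVolume_pos (n : ℕ) : 0 < unitBallVolume n :=
  ENNReal.toReal_pos (Metric.measure_ball_pos volume _ one_pos).ne' measure_ball_lt_top.ne

theorem volume_pcyl (c : Pt n) {ρ : ℝ} (hρ : 0 < ρ) :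
    volume (pcyl c ρ) = ENNReal.ofReal (2 * unitBallVolume n * ρ ^ (n + 2)) := by
  have hball : volume (Metric.ball (0 : EuclideanSpace ℝ (Fin n)) 1) =
      ENNReal.ofReal (unitBallVolume n) :=
    (ENNReal.ofReal_toReal measure_ball_lt_top.ne).symm
  rw [pcyl_eq_ball_prod_ball, Measure.volume_eq_prod, Measure.prod_prod,
    Measure.addHaar_ball_of_pos _ _ hρ, Real.volume_ball, finrank_euclideanSpace_fin, hball,
    ← ENNReal.ofReal_mul (by positivity),
    ← ENNReal.ofReal_mul (mul_nonneg (by positivity) (unitBallVolume_pos n).le)]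
  ring_nf

theorem ofReal_le_measure_near_frontier {M : ℝ} {Ω : Set (Pt n)} {σm : Measure (Pt n)}
    (hA : Ahlfors σm Ω M) {Q p : Pt n} (hQ : Q ∈ frontier Ω) {R r : ℝ}
    (hp : p ∈ pcyl Q (2 * R)) (hpr : pbdry Ω p < r) (hrR : r ≤ 2 * R) :
    ENNReal.ofReal ((r / 4) ^ (n + 1)) ≤
      σm ({q | pdist p q < 2 * r} ∩ (pcyl Q (6 * R) ∩ frontier Ω)) := by
  have hr : 0 < r := (pbdry_nonneg Ω p).trans_lt hpr
  obtain ⟨q₀, hq₀, hpq₀⟩ := exists_pdist_lt_of_pbdry_lt ⟨Q, hQ⟩ hpr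
  calc ENNReal.ofReal ((r / 4) ^ (n + 1)) = ENNReal.ofReal ((r / 2 / 2) ^ (n + 1)) := by ring_nf
    _ ≤ σm (pcyl q₀ (r / 2) ∩ frontier Ω) := (hA q₀ hq₀ (r / 2) (by positivity)).1
    _ ≤ _ := measure_mono fun q ⟨hq, hqΩ⟩ => by
      have hpq : pdist p q < 2 * r := by
        linarith [pdist_lt_of_mem_pcyl hq, pdist_triangle p q₀ q, pdist_comm q q₀]
      have hqp : q ∈ pcyl p (4 * R) := mem_pcyl_of_pdist_lt (by rw [pdist_comm]; linarith)
      refine ⟨hpq, ?_, hqΩ⟩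
      convert mem_pcyl_add hp hqp using 2
      ring

def collarConst (n : ℕ) (M : ℝ) : ℝ :=
  2 ^ (n + 3) * 4 ^ (n + 1) * 6 ^ (n + 1) * unitBallVolume n * M

theorem volume_collar_le {M : ℝ} {Ω : Set (Pt n)} {σm : Measure (Pt n)} (hA : Ahlfors σm Ω M)
    {Q : Pt n} (hQ : Q ∈ frontier Ω) {R r : ℝ} (hr : 0 < r) (hrR : r ≤ 2 * R) :
    volume {p | p ∈ pcyl Q (2 * R) ∧ pbdry Ω p < r} ≤
      ENNReal.ofReal (collarConst n M * R ^ (n + 1) * r) := by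
  have hR : 0 < R := by linarith
  have hK := unitBallVolume_pos n
  set S := {p | p ∈ pcyl Q (2 * R) ∧ pbdry Ω p < r}
  have hS : MeasurableSet S := (isOpen_pcyl Q _).measurableSet.inter
    (measurableSet_lt (continuous_pbdry Ω).measurable measurable_const)
  set F := pcyl Q (6 * R) ∩ frontier Ω
  have hF : MeasurableSet F :=
    (isOpen_pcyl Q _).measurableSet.inter isClosed_frontier.measurableSet
  have hσF : σm F ≤ ENNReal.ofReal (M * (6 * R) ^ (n + 1)) := (hA Q hQ _ (by positivity)).2
  have : IsFiniteMeasure (σm.restrict F) :=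
    isFiniteMeasure_restrict.2 (ne_top_of_le_ne_top ENNReal.ofReal_ne_top hσF)
  have hE : MeasurableSet {x : Pt n × Pt n | pdist x.1 x.2 < 2 * r} :=
    measurableSet_lt continuous_pdist.measurable measurable_const
  -- double counting of the pairs `(p, q) ∈ S × F` with `pdist p q < 2r`
  have hcount := mul_measure_le_mul_measure_univ (μ := volume) (ν := σm.restrict F) hE hS
    (a := ENNReal.ofReal ((r / 4) ^ (n + 1)))
    (b := ENNReal.ofReal (2 * unitBallVolume n * (2 * r) ^ (n + 2)))
    (fun p hp => by
      rw [Measure.restrict_apply' hF]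
      exact ofReal_le_measure_near_frontier hA hQ hp.1 hp.2 hrR)
    (fun q => (measure_mono fun p hp => mem_pcyl_of_pdist_lt hp.1).trans
      (volume_pcyl q (by positivity)).le)
  rw [Measure.restrict_apply_univ] at hcount
  have ha : 0 < (r / 4) ^ (n + 1) := by positivity
  calc volume S ≤ ENNReal.ofReal (2 * unitBallVolume n * (2 * r) ^ (n + 2) *
        (M * (6 * R) ^ (n + 1)) / (r / 4) ^ (n + 1)) := by
        rw [ENNReal.ofReal_div_of_pos ha, ENNReal.le_div_iff_mul_le (Or.inl (by positivity))
          (Or.inl ENNReal.ofReal_ne_top), mul_comm, ENNReal.ofReal_mul (by positivity)]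
        exact hcount.trans (by gcongr)
    _ = ENNReal.ofReal (collarConst n M * R ^ (n + 1) * r) := by
        congr 1
        rw [collarConst, div_pow, div_div_eq_mul_div, div_eq_iff (by positivity)]
        ring

theorem volume_sublevel_le {M : ℝ} {Ω : Set (Pt n)} {σm : Measure (Pt n)} (hA : Ahlfors σm Ω M)
    {Q : Pt n} (hQ : Q ∈ frontier Ω) {R β : ℝ} (hR : 0 < R) (hβ : √(1 / (2 * R)) < β) :
    volume {p | p ∈ Ω ∩ pcyl Q (2 * R) ∧ β < pbdry Ω p ^ (-(1 : ℝ) / 2)} ≤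
      ENNReal.ofReal (collarConst n M * R ^ (n + 1) / β ^ 2) := by
  have hβ0 : 0 < β := (Real.sqrt_nonneg _).trans_lt hβ
  have hβR : 1 / β ^ 2 ≤ 2 * R :=
    (one_div_le (by positivity) (by positivity)).2 ((Real.sqrt_lt' hβ0).1 hβ).le
  calc _ ≤ volume {p | p ∈ pcyl Q (2 * R) ∧ pbdry Ω p < 1 / β ^ 2} :=
        measure_mono fun p hp =>
          ⟨hp.1.2, lt_one_div_sq_of_lt_rpow_neg_half (pbdry_nonneg Ω p) hβ0 hp.2⟩
    _ ≤ _ := volume_collar_le hA hQ (by positivity) hβR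
    _ = _ := by rw [mul_one_div]

end Parabolic

/-- in a domain with Ahlfors regular boundary (constant `M`), the sublevel
sets of the parabolic boundary distance satisfy
`|{(Y,s) ∈ Ω ∩ C_{2R} : δ(Y,s)^{-1/2} > β}| ≤ C R^{n+1} β^{-2}` for
`β > (1/(2R))^{1/2}`, and consequently `∫_{Ω ∩ C_{2R}} δ(Y,s)^{-1/2} ≤ C R^{n+3/2}`,
with `C = C(n, M)`. -/
theorem statement3 (n : ℕ) (M : ℝ) (hM : 1 ≤ M) :
    ∃ C : ℝ, 0 < C ∧
      ∀ (Ω : Set (Pt n)) (σm : Measure (Pt n)),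
        Ahlfors σm Ω M →
        ∀ Q ∈ frontier Ω, ∀ R : ℝ, 0 < R →
          (∀ β : ℝ, Real.sqrt (1 / (2 * R)) < β →
            volume {p : Pt n | p ∈ Ω ∩ pcyl Q (2 * R) ∧ β < pbdry Ω p ^ (-(1 : ℝ) / 2)} ≤
              ENNReal.ofReal (C * R ^ (n + 1) / β ^ 2)) ∧
          ∫⁻ p in Ω ∩ pcyl Q (2 * R), ENNReal.ofReal (pbdry Ω p ^ (-(1 : ℝ) / 2)) ≤
            ENNReal.ofReal (C * R ^ ((n : ℝ) + 3 / 2)) := by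
  have hK := unitBallVolume_pos n
  have hC : 0 < collarConst n M := by
    have : 0 < M := by linarith
    unfold collarConst; positivity
  refine ⟨2 ^ (n + 3) * unitBallVolume n + 2 * collarConst n M, by positivity,
    fun Ω σm hA Q hQ R hR => ⟨fun β hβ => (volume_sublevel_le hA hQ hR hβ).trans ?_, ?_⟩⟩
  · gcongr
    linarith [mul_pos (pow_pos two_pos (n + 3)) hK]
  have hT : 0 < √(1 / (2 * R)) := by positivity
  have hf : Measurable fun p => pbdry Ω p ^ (-(1 : ℝ) / 2) :=
    (continuous_pbdry Ω).measurable.pow_const _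
  calc _ ≤ ENNReal.ofReal (2 * unitBallVolume n * (2 * R) ^ (n + 2) * √(1 / (2 * R)) +
          collarConst n M * R ^ (n + 1) / √(1 / (2 * R))) :=
        lintegral_ofReal_le_of_meas_lt_le _ (fun p => Real.rpow_nonneg (pbdry_nonneg Ω p) _) hf
          (by positivity) (by positivity) hT
          (fun t => (measure_mono (subset_univ _)).trans <| by
            rw [Measure.restrict_apply_univ]
            exact (measure_mono inter_subset_right).trans (volume_pcyl Q (by positivity)).le)
          (fun t ht => by
            rw [Measure.restrict_apply (measurableSet_lt measurable_const hf), inter_comm]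
            exact volume_sublevel_le hA hQ hR ht)
    _ ≤ _ := ENNReal.ofReal_le_ofReal (add_le_rpow_three_halves n hK.le hC.le hR)
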